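/- Assume the support of μ is an infinite set, so the orthonormal polynomials T_k exist. Let (Q0, Q1, Q2) be a type I Hermite–Padé triple of order n for (f1, f2). Then c_k(Q1 + Q2 σ̂) = ∫_Δ (Q1 + Q2 σ̂) T_k dμ = 0 for all k = 0,…,2n; in particular, if Q2 is not identically zero then (−Q1, Q2) is a linear Tschebyshev–Padé pair of order n for the Markov function σ̂. -/

import Mathlib

/-!
Put `F = Q1 + Q2 σ̂` and `C_g(z) = ∫ g(x) (z - x)⁻¹ dμ(x)`. Since `(Q(z) - Q(x)) / (z - x)` is a
polynomial in `z`, `Q1 f1 + Q2 f2 = P + C_F` for some polynomial `P`, and the geometric expansion of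
`z ^ N / (z - x)` gives `z ^ N C_F(z) = ∑_{j < N} m_j z ^ (N - 1 - j) + O(1 / z)` with the moments
`m_j = ∫ x ^ j F dμ`. Hence `z ^ (2n+2) (Q0 + Q1 f1 + Q2 f2)` is a polynomial plus `O(1 / z)`; being
bounded, that polynomial is constant, so `m_j = 0` for `j ≤ 2n` and `F` is orthogonal to every
polynomial of degree at most `2n`, in particular to `T_k`.
-/

open MeasureTheory Polynomial

def measSupport (μ : Measure ℝ) : Set ℝ := {x | ∀ U ∈ nhds x, μ U ≠ 0}

open Finset Filter

lemma Polynomial.degree_le_zero_of_norm_eval_le {𝕜 : Type*} [NontriviallyNormedField 𝕜]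
    (p : 𝕜[X]) {C R : ℝ} (h : ∀ z : 𝕜, R < ‖z‖ → ‖p.eval z‖ ≤ C) : p.degree ≤ 0 := by
  by_contra! hdeg
  have hnorm := tendsto_norm_cobounded_atTop (E := 𝕜)
  obtain ⟨z, hzC, hzR⟩ := (((p.tendsto_norm_atTop hdeg hnorm).eventually_gt_atTop C).and
    (hnorm.eventually_gt_atTop R)).exists
  exact (h z hzR).not_gt hzC

lemma integrable_integral_inv_sub {μ σ : Measure ℝ} [IsFiniteMeasure μ] [IsFiniteMeasure σ]
    {s t : Set ℝ} (hs : IsCompact s) (ht : IsClosed t) (hst : Disjoint s t)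
    (hμ : ∀ᵐ x ∂μ, x ∈ s) (hσ : ∀ᵐ y ∂σ, y ∈ t) :
    Integrable (fun x : ℝ => ∫ y, ((x : ℂ) - y)⁻¹ ∂σ) μ := by
  obtain ⟨δ, hδ, hsep⟩ := Metric.exists_pos_forall_lt_edist hs ht hst
  have hmeas : StronglyMeasurable (fun x : ℝ => ∫ y, ((x : ℂ) - y)⁻¹ ∂σ) :=
    StronglyMeasurable.integral_prod_right' (f := fun p : ℝ × ℝ => ((p.1 : ℂ) - p.2)⁻¹)
      (by fun_prop)
  refine Integrable.of_bound hmeas.aestronglyMeasurable ((δ : ℝ)⁻¹ * σ.real Set.univ) ?_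
  filter_upwards [hμ] with x hx
  refine norm_integral_le_of_norm_le_const (hσ.mono fun y hy => ?_)
  have hδxy : (δ : ℝ) < |x - y| := by
    have := hsep x hx y hy
    rwa [edist_dist, ← ENNReal.ofReal_coe_nnreal,
      ENNReal.ofReal_lt_ofReal_iff_of_nonneg δ.coe_nonneg, Real.dist_eq] at this
  rw [norm_inv, ← Complex.ofReal_sub, Complex.norm_real, Real.norm_eq_abs]
  exact inv_anti₀ (by positivity) hδxy.le

noncomputable def cauchyTransform (μ : Measure ℝ) (g : ℝ → ℂ) (z : ℂ) : ℂ :=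
  ∫ x, g x * (z - x)⁻¹ ∂μ

section CauchyTransform

variable {μ : Measure ℝ} {r : ℝ} {g h : ℝ → ℂ} {z : ℂ}

lemma norm_inv_sub_ofReal_le (hz : r < ‖z‖) {x : ℝ} (hx : |x| ≤ r) :
    ‖(z - x)⁻¹‖ ≤ (‖z‖ - r)⁻¹ := by
  rw [norm_inv]
  refine inv_anti₀ (sub_pos.2 hz) ?_
  calc ‖z‖ - r ≤ ‖z‖ - ‖(x : ℂ)‖ := by rw [Complex.norm_real, Real.norm_eq_abs]; linarith
    _ ≤ ‖z - x‖ := norm_sub_norm_le _ _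

lemma sub_ofReal_ne_zero (hz : r < ‖z‖) {x : ℝ} (hx : |x| ≤ r) : z - x ≠ 0 := by
  rintro hzx
  rw [sub_eq_zero.1 hzx, Complex.norm_real, Real.norm_eq_abs] at hz
  linarith

lemma MeasureTheory.Integrable.continuous_mul (hμ : ∀ᵐ x ∂μ, |x| ≤ r) (hg : Integrable g μ)
    {φ : ℝ → ℂ} (hφ : Continuous φ) : Integrable (fun x => φ x * g x) μ := by
  obtain ⟨C, hC⟩ := (isCompact_Icc (a := -r) (b := r)).exists_bound_of_continuousOn hφ.continuousOn
  exact hg.bdd_mul hφ.aestronglyMeasurable (hμ.mono fun x hx => hC x (abs_le.1 hx))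

lemma MeasureTheory.Integrable.eval_mul (hμ : ∀ᵐ x ∂μ, |x| ≤ r) (hg : Integrable g μ) (Q : ℂ[X]) :
    Integrable (fun x : ℝ => Q.eval (x : ℂ) * g x) μ :=
  hg.continuous_mul hμ (by fun_prop)

lemma MeasureTheory.Integrable.mul_inv_sub (hμ : ∀ᵐ x ∂μ, |x| ≤ r) (hg : Integrable g μ)
    (hz : r < ‖z‖) : Integrable (fun x => g x * (z - x)⁻¹) μ :=
  hg.mul_bdd (by fun_prop) (hμ.mono fun _ hx => norm_inv_sub_ofReal_le hz hx)

lemma cauchyTransform_const_mul (a : ℂ) :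
    cauchyTransform μ (fun x => a * g x) z = a * cauchyTransform μ g z := by
  simp only [cauchyTransform, mul_assoc, integral_const_mul]

lemma cauchyTransform_add (hμ : ∀ᵐ x ∂μ, |x| ≤ r) (hg : Integrable g μ) (hh : Integrable h μ)
    (hz : r < ‖z‖) :
    cauchyTransform μ (fun x => g x + h x) z = cauchyTransform μ g z + cauchyTransform μ h z := by
  simp only [cauchyTransform, add_mul]
  exact integral_add (hg.mul_inv_sub hμ hz) (hh.mul_inv_sub hμ hz)

lemma norm_cauchyTransform_le (hμ : ∀ᵐ x ∂μ, |x| ≤ r) (hg : Integrable g μ) (hz : r < ‖z‖) :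
    ‖cauchyTransform μ g z‖ ≤ (∫ x, ‖g x‖ ∂μ) * (‖z‖ - r)⁻¹ := by
  rw [← integral_mul_const]
  refine (norm_integral_le_integral_norm _).trans (integral_mono_ae ?_ ?_ ?_)
  · exact (hg.mul_inv_sub hμ hz).norm
  · exact hg.norm.mul_const _
  · filter_upwards [hμ] with x hx
    rw [norm_mul]
    exact mul_le_mul_of_nonneg_left (norm_inv_sub_ofReal_le hz hx) (norm_nonneg _)

lemma pow_mul_cauchyTransform (hμ : ∀ᵐ x ∂μ, |x| ≤ r) (hg : Integrable g μ) (hz : r < ‖z‖)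
    (N : ℕ) :
    z ^ N * cauchyTransform μ g z =
      (∑ k ∈ range N, C (∫ x, (x : ℂ) ^ (N - 1 - k) * g x ∂μ) * X ^ k).eval z +
        cauchyTransform μ (fun x => (x : ℂ) ^ N * g x) z := by
  have hpow : ∀ j, Integrable (fun x : ℝ => (x : ℂ) ^ j * g x) μ := fun j =>
    hg.continuous_mul hμ (by fun_prop)
  have hpt : ∀ᵐ x ∂μ, z ^ N * (g x * (z - x)⁻¹) =
      ∑ k ∈ range N, z ^ k * ((x : ℂ) ^ (N - 1 - k) * g x) + (x : ℂ) ^ N * g x * (z - x)⁻¹ := by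
    filter_upwards [hμ] with x hx
    have hzx := sub_ofReal_ne_zero hz hx
    have hgeom := geom_sum₂_mul z (x : ℂ) N
    have hinv : (z - x) * (z - x)⁻¹ = 1 := mul_inv_cancel₀ hzx
    rw [show ∑ k ∈ range N, z ^ k * ((x : ℂ) ^ (N - 1 - k) * g x) =
        g x * ∑ k ∈ range N, z ^ k * (x : ℂ) ^ (N - 1 - k) by
      rw [Finset.mul_sum]; exact sum_congr rfl fun k _ => by ring]
    linear_combination (-(g x * (z - x)⁻¹)) * hgeom +
      (g x * ∑ k ∈ range N, z ^ k * (x : ℂ) ^ (N - 1 - k)) * hinv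
  rw [cauchyTransform, ← integral_const_mul, integral_congr_ae hpt,
    integral_add (integrable_finsetSum _ fun k _ => (hpow _).const_mul _)
      ((hpow N).mul_inv_sub hμ hz), integral_finsetSum _ fun k _ => (hpow _).const_mul _]
  simp only [eval_finsetSum, eval_mul, eval_C, eval_pow, eval_X, integral_const_mul, mul_comm,
    cauchyTransform]

lemma exists_eval_mul_cauchyTransform (hμ : ∀ᵐ x ∂μ, |x| ≤ r) (hg : Integrable g μ)
    (Q : ℂ[X]) : ∃ P : ℂ[X], ∀ z : ℂ, r < ‖z‖ →
      Q.eval z * cauchyTransform μ g z =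
        P.eval z + cauchyTransform μ (fun x => Q.eval (x : ℂ) * g x) z := by
  induction Q using Polynomial.induction_on' with
  | add p q hp hq =>
    obtain ⟨P, hP⟩ := hp
    obtain ⟨P', hP'⟩ := hq
    refine ⟨P + P', fun z hz => ?_⟩
    simp only [eval_add, add_mul]
    rw [cauchyTransform_add hμ (hg.eval_mul hμ p) (hg.eval_mul hμ q) hz, hP z hz, hP' z hz]
    ring
  | monomial n a =>
    refine ⟨C a * ∑ k ∈ range n, C (∫ x, (x : ℂ) ^ (n - 1 - k) * g x ∂μ) * X ^ k, fun z hz => ?_⟩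
    simp only [eval_monomial, eval_mul, eval_C, mul_assoc]
    rw [pow_mul_cauchyTransform hμ hg hz, cauchyTransform_const_mul, mul_add]

lemma integral_pow_mul_eq_zero_of_bounded (hμ : ∀ᵐ x ∂μ, |x| ≤ r) (hg : Integrable g μ)
    (P : ℂ[X]) {N : ℕ} {M R : ℝ}
    (hbd : ∀ z : ℂ, R < ‖z‖ → ‖z ^ N * (P.eval z + cauchyTransform μ g z)‖ ≤ M)
    {j : ℕ} (hj : j + 2 ≤ N) : ∫ x, (x : ℂ) ^ j * g x ∂μ = 0 := by
  set S : ℂ[X] := X ^ N * P + ∑ k ∈ range N, C (∫ x, (x : ℂ) ^ (N - 1 - k) * g x ∂μ) * X ^ k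
  have hgN : Integrable (fun x : ℝ => (x : ℂ) ^ N * g x) μ := hg.continuous_mul hμ (by fun_prop)
  have hS : ∀ z : ℂ, max R (r + 1) < ‖z‖ →
      ‖S.eval z‖ ≤ M + ∫ x, ‖(x : ℂ) ^ N * g x‖ ∂μ := by
    intro z hz
    have hzR : R < ‖z‖ := (le_max_left _ _).trans_lt hz
    have hzr : r + 1 < ‖z‖ := (le_max_right _ _).trans_lt hz
    have hS_eq : S.eval z = z ^ N * (P.eval z + cauchyTransform μ g z) -
        cauchyTransform μ (fun x => (x : ℂ) ^ N * g x) z := by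
      rw [mul_add, pow_mul_cauchyTransform hμ hg (by linarith)]
      simp only [S, eval_add, eval_mul, eval_pow, eval_X]
      ring
    have hrem : ‖cauchyTransform μ (fun x => (x : ℂ) ^ N * g x) z‖ ≤
        ∫ x, ‖(x : ℂ) ^ N * g x‖ ∂μ :=
      (norm_cauchyTransform_le hμ hgN (by linarith)).trans <|
        mul_le_of_le_one_right (integral_nonneg fun _ => norm_nonneg _)
          (inv_le_one_of_one_le₀ (by linarith))
    rw [hS_eq]
    exact (norm_sub_le _ _).trans (add_le_add (hbd z hzR) hrem)
  have hcoeff : S.coeff (N - 1 - j) = 0 :=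
    coeff_eq_zero_of_degree_lt <| (Polynomial.degree_le_zero_of_norm_eval_le S hS).trans_lt <| by
      exact_mod_cast (show 0 < N - 1 - j by omega)
  simp only [S, coeff_add, coeff_X_pow_mul', finsetSum_coeff, coeff_C_mul_X_pow,
    Finset.sum_ite_eq, Finset.mem_range] at hcoeff
  rwa [if_neg (by omega), if_pos (by omega), zero_add, show N - 1 - (N - 1 - j) = j by omega]
    at hcoeff

lemma integral_pow_mul_eq_zero_of_hermitePade (hμ : ∀ᵐ x ∂μ, |x| ≤ r) (hg : Integrable g μ)
    (hh : Integrable h μ) (Q₀ Q₁ Q₂ : ℂ[X]) {N : ℕ} {M R : ℝ}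
    (hbd : ∀ z : ℂ, R < ‖z‖ → ‖z ^ N * (Q₀.eval z + Q₁.eval z * cauchyTransform μ g z +
      Q₂.eval z * cauchyTransform μ h z)‖ ≤ M)
    {j : ℕ} (hj : j + 2 ≤ N) :
    ∫ x, (x : ℂ) ^ j * (Q₁.eval (x : ℂ) * g x + Q₂.eval (x : ℂ) * h x) ∂μ = 0 := by
  obtain ⟨P₁, hP₁⟩ := exists_eval_mul_cauchyTransform hμ hg Q₁
  obtain ⟨P₂, hP₂⟩ := exists_eval_mul_cauchyTransform hμ hh Q₂
  have hint : Integrable (fun x : ℝ => Q₁.eval (x : ℂ) * g x + Q₂.eval (x : ℂ) * h x) μ :=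
    (hg.eval_mul hμ Q₁).add (hh.eval_mul hμ Q₂)
  refine integral_pow_mul_eq_zero_of_bounded (M := M) (R := max R r) hμ hint (Q₀ + P₁ + P₂)
    (fun z hz => ?_) hj
  have hzr : r < ‖z‖ := (le_max_right _ _).trans_lt hz
  rw [cauchyTransform_add hμ (hg.eval_mul hμ Q₁) (hh.eval_mul hμ Q₂) hzr]
  convert hbd z ((le_max_left _ _).trans_lt hz) using 3
  rw [eval_add, eval_add, hP₁ z hzr, hP₂ z hzr]
  ring

lemma integral_mul_eval_eq_zero (hμ : ∀ᵐ x ∂μ, |x| ≤ r) (hg : Integrable g μ) {d : ℕ}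
    (hmoment : ∀ j ≤ d, ∫ x, (x : ℂ) ^ j * g x ∂μ = 0)
    (p : ℝ[X]) (hp : p.natDegree ≤ d) : ∫ x, g x * ((p.eval x : ℝ) : ℂ) ∂μ = 0 := by
  have hexpand : ∀ x : ℝ, g x * ((p.eval x : ℝ) : ℂ) =
      ∑ i ∈ range (p.natDegree + 1), (p.coeff i : ℂ) * ((x : ℂ) ^ i * g x) := by
    intro x
    rw [eval_eq_sum_range, Complex.ofReal_sum, Finset.mul_sum]
    exact sum_congr rfl fun i _ => by push_cast; ring
  simp_rw [hexpand]
  rw [integral_finsetSum _ fun i _ => (hg.continuous_mul hμ (by fun_prop)).const_mul _]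
  refine sum_eq_zero fun i hi => ?_
  rw [integral_const_mul, hmoment i (by rw [mem_range] at hi; omega), mul_zero]

end CauchyTransform

theorem hermite_pade_gives_tschebyshev_pade_general
    (μ : Measure ℝ) [IsFiniteMeasure μ] (hμsupp : μ (Set.Icc (-1 : ℝ) 1)ᶜ = 0)
    (T : ℕ → Polynomial ℝ)
    (hTdeg : ∀ k, (T k).degree = k)
    (c d : ℝ) (hdisj : Set.Icc c d ∩ Set.Icc (-1 : ℝ) 1 = ∅)
    (σ : Measure ℝ) [IsFiniteMeasure σ] (hσsupp : σ (Set.Icc c d)ᶜ = 0)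
    (f1 f2 : ℂ → ℂ)
    (hf1 : ∀ z : ℂ, f1 z = ∫ x : ℝ, (z - (x : ℂ))⁻¹ ∂μ)
    (hf2 : ∀ z : ℂ, f2 z = ∫ x : ℝ, (∫ t : ℝ, ((x : ℂ) - (t : ℂ))⁻¹ ∂σ) * (z - (x : ℂ))⁻¹ ∂μ)
    (n : ℕ) (Q0 Q1 Q2 : Polynomial ℂ)
    (hpade : ∃ C R : ℝ, ∀ z : ℂ, R < ‖z‖ →
      ‖z ^ (2 * n + 2) *
        (Q0.eval z + Q1.eval z * f1 z + Q2.eval z * f2 z)‖ ≤ C) :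
    (∀ k ≤ 2 * n, ∫ x : ℝ, (Q1.eval (x : ℂ) +
        Q2.eval (x : ℂ) * (∫ t : ℝ, ((x : ℂ) - (t : ℂ))⁻¹ ∂σ)) *
          (((T k).eval x : ℝ) : ℂ) ∂μ = 0) ∧
    (Q2 ≠ 0 → ∀ k ≤ 2 * n,
      ∫ x : ℝ, (Q2.eval (x : ℂ) * (∫ t : ℝ, ((x : ℂ) - (t : ℂ))⁻¹ ∂σ) -
        (-Q1).eval (x : ℂ)) * (((T k).eval x : ℝ) : ℂ) ∂μ = 0) := by
  set markov : ℝ → ℂ := fun x => ∫ t : ℝ, ((x : ℂ) - (t : ℂ))⁻¹ ∂σ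
  have hΔ : ∀ᵐ x ∂μ, x ∈ Set.Icc (-1 : ℝ) 1 := mem_ae_iff.2 hμsupp
  have hμ : ∀ᵐ x ∂μ, |x| ≤ 1 := hΔ.mono fun x hx => abs_le.2 hx
  have hone : Integrable (fun _ : ℝ => (1 : ℂ)) μ := integrable_const 1
  have hmarkov : Integrable markov μ :=
    integrable_integral_inv_sub isCompact_Icc isClosed_Icc
      (Set.disjoint_iff_inter_eq_empty.2 (by rw [Set.inter_comm, hdisj])) hΔ (mem_ae_iff.2 hσsupp)
  have hint : Integrable (fun x : ℝ => Q1.eval (x : ℂ) * 1 + Q2.eval (x : ℂ) * markov x) μ :=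
    (hone.eval_mul hμ Q1).add (hmarkov.eval_mul hμ Q2)
  have hf1' : ∀ z, f1 z = cauchyTransform μ (fun _ => 1) z := by
    simp only [hf1, cauchyTransform, one_mul, implies_true]
  obtain ⟨M, R, hbd⟩ := hpade
  have hmoment (j : ℕ) (hj : j ≤ 2 * n) :
      ∫ x, (x : ℂ) ^ j * (Q1.eval (x : ℂ) + Q2.eval (x : ℂ) * markov x) ∂μ = 0 := by
    simpa only [mul_one] using integral_pow_mul_eq_zero_of_hermitePade hμ hone hmarkov Q0 Q1 Q2
      (fun z hz => hf1' z ▸ hf2 z ▸ hbd z hz) (show j + 2 ≤ 2 * n + 2 by omega)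
  have horth (k : ℕ) (hk : k ≤ 2 * n) :
      ∫ x, (Q1.eval (x : ℂ) + Q2.eval (x : ℂ) * markov x) * (((T k).eval x : ℝ) : ℂ) ∂μ = 0 :=
    integral_mul_eval_eq_zero hμ (by simpa only [mul_one] using hint) hmoment (T k)
      ((natDegree_eq_of_degree_eq_some (hTdeg k)).trans_le hk)
  refine ⟨horth, fun _ k hk => ?_⟩
  rw [← horth k hk]
  congr 1 with x
  rw [eval_neg]
  ring

/-- If `(Q0, Q1, Q2)` is a type I Hermite–Padé triple of order `n` for the Nikishin pair
`(f1, f2)`, then `c_k(Q1 + Q2 σ̂) = 0` for all `k = 0, …, 2n`; in particular, if `Q2 ≠ 0` then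
`(−Q1, Q2)` is a linear Tschebyshev–Padé pair of order `n` for the Markov function `σ̂`. -/
theorem hermite_pade_gives_tschebyshev_pade
    (μ : Measure ℝ) [IsFiniteMeasure μ] (hμsupp : μ (Set.Icc (-1 : ℝ) 1)ᶜ = 0)
    (hμinf : (measSupport μ).Infinite)
    (T : ℕ → Polynomial ℝ)
    (hTdeg : ∀ k, (T k).degree = k)
    (hTlead : ∀ k, 0 < (T k).leadingCoeff)
    (hTorth : ∀ j k, ∫ x, (T j).eval x * (T k).eval x ∂μ = if j = k then 1 else 0)
    (c d : ℝ) (hcd : c ≤ d) (hdisj : Set.Icc c d ∩ Set.Icc (-1 : ℝ) 1 = ∅)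
    (σ : Measure ℝ) [IsFiniteMeasure σ] (hσsupp : σ (Set.Icc c d)ᶜ = 0)
    (f1 f2 : ℂ → ℂ)
    (hf1 : ∀ z : ℂ, f1 z = ∫ x : ℝ, (z - (x : ℂ))⁻¹ ∂μ)
    (hf2 : ∀ z : ℂ, f2 z = ∫ x : ℝ, (∫ t : ℝ, ((x : ℂ) - (t : ℂ))⁻¹ ∂σ) * (z - (x : ℂ))⁻¹ ∂μ)
    (n : ℕ) (Q0 Q1 Q2 : Polynomial ℂ)
    (hQ0 : Q0.natDegree ≤ n - 1) (hQ1 : Q1.natDegree ≤ n) (hQ2 : Q2.natDegree ≤ n)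
    (hnz : ¬(Q0 = 0 ∧ Q1 = 0 ∧ Q2 = 0))
    (hpade : ∃ C R : ℝ, ∀ z : ℂ, R < ‖z‖ →
      ‖z ^ (2 * n + 2) *
        (Q0.eval z + Q1.eval z * f1 z + Q2.eval z * f2 z)‖ ≤ C) :
    (∀ k ≤ 2 * n, ∫ x : ℝ, (Q1.eval (x : ℂ) +
        Q2.eval (x : ℂ) * (∫ t : ℝ, ((x : ℂ) - (t : ℂ))⁻¹ ∂σ)) *
          (((T k).eval x : ℝ) : ℂ) ∂μ = 0) ∧
    (Q2 ≠ 0 → ∀ k ≤ 2 * n,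
      ∫ x : ℝ, (Q2.eval (x : ℂ) * (∫ t : ℝ, ((x : ℂ) - (t : ℂ))⁻¹ ∂σ) -
        (-Q1).eval (x : ℂ)) * (((T k).eval x : ℝ) : ℂ) ∂μ = 0) :=
  hermite_pade_gives_tschebyshev_pade_general μ hμsupp T hTdeg c d hdisj σ hσsupp f1 f2 hf1 hf2 n Q0
    Q1 Q2 hpade
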